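/- Let m ≥ 3, let P be a symmetric 2-index array on ℝ^m and let v ∈ ℝ^m. Then the array D(P,v) is antisymmetric in its last two indices (D(P,v)_{ijk} = −D(P,v)_{ikj} for all i,j,k), all of its traces vanish (Σ_i D(P,v)_{iik} = 0 and Σ_j D(P,v)_{ijj} = 0 and Σ_i D(P,v)_{iji} = 0 for all remaining free indices), and its contraction with v in the first slot satisfies Σ_i v_i D(P,v)_{ijk} = (1/(m−1))·( v_k·Σ_l v_l P_{lj} − v_j·Σ_l v_l P_{lk} ) for all j, k. -/

import Mathlib

/-- The Kronecker delta on `Fin m`, regarded as a real 2-index array. -/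
def kdelta (m : ℕ) (i j : Fin m) : ℝ := if i = j then 1 else 0

/-- The 3-index array `D(P,v)` associated with a 2-index array `P` and a vector `v`:
`D(P,v)_{ijk} = (1/(m−2))·[ v_k P_{ij} − v_j P_{ik}
  + (1/(m−1))·Σ_l v_l (P_{lk}δ_{ij} − P_{lj}δ_{ik})
  − ((Σ_l P_{ll})/(m−1))·(v_kδ_{ij} − v_jδ_{ik}) ]`. -/
noncomputable def Dt (m : ℕ) (P : Fin m → Fin m → ℝ) (v : Fin m → ℝ)
    (i j k : Fin m) : ℝ :=
  (1 / ((m : ℝ) - 2)) *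
    (v k * P i j - v j * P i k
      + (1 / ((m : ℝ) - 1)) * ∑ l, v l * (P l k * kdelta m i j - P l j * kdelta m i k)
      - ((∑ l, P l l) / ((m : ℝ) - 1)) * (v k * kdelta m i j - v j * kdelta m i k))

/-!
Summing out `l`, the bracket defining `D(P,v)_{ijk}` becomes
`(v_k P_{ij} + a_k δ_{ij}) − (v_j P_{ik} + a_j δ_{ik})` with `a = (vᵀP − (tr P) v)/(m−1)`,
visibly antisymmetric in `j, k`; so the `(j,k)`-trace vanishes and the `(i,k)`-trace is minus
the `(i,j)`-trace. The latter and the contraction with `v` are δ-sums, and the weights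
`1/(m−1)` and `1/(m−2)` are exactly those making the first vanish and normalising the second.
-/

open Matrix

lemma kdelta_self {m : ℕ} (i : Fin m) : kdelta m i i = 1 := if_pos rfl

lemma sum_mul_kdelta {m : ℕ} (f : Fin m → ℝ) (k : Fin m) : ∑ i, f i * kdelta m i k = f k := by
  simp [kdelta]

lemma kdelta_eq_single {m : ℕ} (i j : Fin m) :
    kdelta m i j = Pi.single (M := fun _ => ℝ) j 1 i := by
  simp [kdelta, Pi.single_apply]

namespace Dt

variable {m : ℕ} (P : Fin m → Fin m → ℝ) (v : Fin m → ℝ)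

lemma eq_vecMul_trace (i j k : Fin m) :
    Dt m P v i j k =
      (1 / ((m : ℝ) - 2)) *
        (v k * P i j - v j * P i k
          + (1 / ((m : ℝ) - 1)) * ((v ᵥ* P) k * kdelta m i j - (v ᵥ* P) j * kdelta m i k)
          - (trace P / ((m : ℝ) - 1)) * (v k * kdelta m i j - v j * kdelta m i k)) := by
  simp only [Dt, vecMul, dotProduct, trace, diag, mul_sub, ← mul_assoc, Finset.sum_sub_distrib,
    ← Finset.sum_mul]

lemma antisymm (i j k : Fin m) : Dt m P v i j k = - Dt m P v i k j := by
  rw [eq_vecMul_trace, eq_vecMul_trace]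
  ring

lemma apply_self_eq_zero (i j : Fin m) : Dt m P v i j j = 0 := by
  linarith [antisymm P v i j j]

lemma sum_first_second_eq_zero (hm₁ : (m : ℝ) - 1 ≠ 0) (k : Fin m) :
    ∑ i, Dt m P v i i k = 0 := by
  have hT : ∑ i, P i i = trace P := rfl
  have hS : ∑ i, v i * P i k = (v ᵥ* P) k := rfl
  simp only [eq_vecMul_trace, kdelta_self, mul_one, ← Finset.mul_sum, Finset.sum_add_distrib,
    Finset.sum_sub_distrib, sum_mul_kdelta, Finset.sum_const, Finset.card_univ, Fintype.card_fin,
    nsmul_eq_mul, hT, hS]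
  field_simp
  ring

lemma sum_first_third_eq_zero (hm₁ : (m : ℝ) - 1 ≠ 0) (j : Fin m) :
    ∑ i, Dt m P v i j i = 0 := by
  simp only [antisymm P v _ j, Finset.sum_neg_distrib, sum_first_second_eq_zero P v hm₁,
    neg_zero]

lemma fun_first_eq (j k : Fin m) :
    (fun i => Dt m P v i j k) = (1 / ((m : ℝ) - 2)) •
      (v k • (fun i => P i j) - v j • (fun i => P i k)
        + (((v ᵥ* P) k - trace P * v k) / ((m : ℝ) - 1)) • Pi.single j 1
        - (((v ᵥ* P) j - trace P * v j) / ((m : ℝ) - 1)) • Pi.single k 1) := by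
  funext i
  simp only [eq_vecMul_trace, kdelta_eq_single, Pi.smul_apply, Pi.add_apply, Pi.sub_apply,
    smul_eq_mul]
  ring

lemma sum_mul_first (hm₁ : (m : ℝ) - 1 ≠ 0) (hm₂ : (m : ℝ) - 2 ≠ 0) (j k : Fin m) :
    ∑ i, v i * Dt m P v i j k =
      (1 / ((m : ℝ) - 1)) * (v k * (v ᵥ* P) j - v j * (v ᵥ* P) k) := by
  have hS (j : Fin m) : v ⬝ᵥ (fun i => P i j) = (v ᵥ* P) j := rfl
  change v ⬝ᵥ (fun i => Dt m P v i j k) = _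
  rw [fun_first_eq]
  simp only [dotProduct_smul, dotProduct_add, dotProduct_sub, dotProduct_single, hS, smul_eq_mul,
    mul_one]
  field_simp
  ring

end Dt

theorem Dt_symmetries_general (m : ℕ) (hm : 3 ≤ m) (P : Fin m → Fin m → ℝ)
    (v : Fin m → ℝ) :
    (∀ i j k, Dt m P v i j k = - Dt m P v i k j) ∧
    (∀ k, (∑ i, Dt m P v i i k) = 0) ∧
    (∀ i, (∑ j, Dt m P v i j j) = 0) ∧
    (∀ j, (∑ i, Dt m P v i j i) = 0) ∧
    (∀ j k, (∑ i, v i * Dt m P v i j k) =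
      (1 / ((m : ℝ) - 1)) * (v k * (∑ l, v l * P l j) - v j * ∑ l, v l * P l k)) := by
  have hm' : (3 : ℝ) ≤ m := by exact_mod_cast hm
  have hm₁ : (m : ℝ) - 1 ≠ 0 := by linarith
  have hm₂ : (m : ℝ) - 2 ≠ 0 := by linarith
  exact ⟨Dt.antisymm P v, Dt.sum_first_second_eq_zero P v hm₁,
    fun i => Finset.sum_eq_zero fun j _ => Dt.apply_self_eq_zero P v i j,
    Dt.sum_first_third_eq_zero P v hm₁, Dt.sum_mul_first P v hm₁ hm₂⟩

/-- `D(P,v)` is antisymmetric in its last two indices, all of its traces vanish, and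
its contraction with `v` in the first slot is
`Σ_i v_i D(P,v)_{ijk} = (1/(m−1))·(v_k Σ_l v_l P_{lj} − v_j Σ_l v_l P_{lk})`. -/
theorem Dt_symmetries (m : ℕ) (hm : 3 ≤ m) (P : Fin m → Fin m → ℝ)
    (hP : ∀ i j, P i j = P j i) (v : Fin m → ℝ) :
    (∀ i j k, Dt m P v i j k = - Dt m P v i k j) ∧
    (∀ k, (∑ i, Dt m P v i i k) = 0) ∧
    (∀ i, (∑ j, Dt m P v i j j) = 0) ∧
    (∀ j, (∑ i, Dt m P v i j i) = 0) ∧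
    (∀ j k, (∑ i, v i * Dt m P v i j k) =
      (1 / ((m : ℝ) - 1)) * (v k * (∑ l, v l * P l j) - v j * ∑ l, v l * P l k)) :=
  Dt_symmetries_general m hm P v
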